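/- Every higher block system of a strongly synchronizing subshift is strongly synchronizing. -/

import Mathlib

/-- The shift on `Σ^ℤ`: `(x_i)_{i∈ℤ} ↦ (x_{i+1})_{i∈ℤ}`. -/
def shift {A : Type*} (x : ℤ → A) : ℤ → A := fun i => x (i + 1)

/-- The word `x_{[a,b]}` carried by the block of `x` on the interval `[a, b]`. -/
def block {A : Type*} (x : ℤ → A) (a b : ℤ) : List A :=
  (List.range (b + 1 - a).toNat).map fun k => x (a + k)

/-- A word is admissible for `X` if it appears in a point of `X`. -/
def Admissible {A : Type*} (X : Set (ℤ → A)) (w : List A) : Prop :=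
  ∃ x ∈ X, ∃ n : ℤ, ∀ (k : ℕ) (h : k < w.length), x (n + k) = w.get ⟨k, h⟩

/-- A word `v` is synchronizing for `X` if it is admissible and whenever `uv` and `vw`
are admissible, so is `uvw`. -/
def IsSyncWord {A : Type*} (X : Set (ℤ → A)) (v : List A) : Prop :=
  Admissible X v ∧ ∀ u w : List A, Admissible X (u ++ v) → Admissible X (v ++ w) →
    Admissible X (u ++ v ++ w)

/-- A subshift: a nonempty, closed, shift-invariant subset of `Σ^ℤ`. -/
def IsSubshift {A : Type*} [TopologicalSpace A] (X : Set (ℤ → A)) : Prop :=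
  X.Nonempty ∧ IsClosed X ∧ shift '' X = X

/-- Topological transitivity of a subshift, expressed on its language: any two admissible
words can be joined by an admissible transition word. -/
def LangTransitive {A : Type*} (X : Set (ℤ → A)) : Prop :=
  ∀ u v : List A, Admissible X u → Admissible X v → ∃ w, Admissible X (u ++ w ++ v)

/-- A synchronizing subshift: topologically transitive with a synchronizing word. -/
def SyncSubshift {A : Type*} (X : Set (ℤ → A)) : Prop :=
  LangTransitive X ∧ ∃ v : List A, IsSyncWord X v

/-- A strongly synchronizing subshift: synchronizing symbols appear uniformly close
(within distance `Q`) to synchronizing words. -/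
def StronglySync {A : Type*} (X : Set (ℤ → A)) : Prop :=
  SyncSubshift X ∧ ∃ Q : ℕ, ∀ x ∈ X, ∀ I₁ I₂ : ℤ, I₁ ≤ I₂ →
    IsSyncWord X (block x I₁ I₂) →
    ∃ i : ℤ, I₁ - Q ≤ i ∧ i ≤ I₂ + Q ∧ IsSyncWord X [x i]

/-- The higher block system `X^{⟨[a,b]⟩}` of `X`, over the alphabet of words. -/
def higherBlock {A : Type*} (X : Set (ℤ → A)) (a b : ℤ) : Set (ℤ → List A) :=
  { y | ∃ x ∈ X, ∀ i : ℤ, y i = block x (i + a) (i + b) }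

/-!
Synchronization is a gluing property of points: an admissible word `v` is synchronizing iff any
two points of `X` passing through `v` can be merged into a point of `X` that follows the first one
up to `v` and the second one from `v` on. For `m ≥ 1`, two length-`m` windows of higher block codes
agree iff the corresponding length-`m + (b - a)` windows of the points agree, so gluing along a
word of `X` and gluing along its code are the same thing. Thus the synchronizing words of the
higher block system are the codes of the synchronizing words of `X` longer than `b - a`, and a
synchronizing symbol of `X` at distance `≤ Q` from `x_{[I₁ + a, I₂ + b]}` yields one of the code
at distance `≤ Q + (b - a)` from `[I₁, I₂]`.
-/

section Window

variable {A : Type*}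

/-- `block` indexed by start and length, which avoids the `Int.toNat` in its length. -/
def window (x : ℤ → A) (n : ℤ) (m : ℕ) : List A :=
  (List.range m).map fun k : ℕ => x (n + k)

theorem block_eq_window (x : ℤ → A) (s t : ℤ) : block x s t = window x s (t + 1 - s).toNat := by
  simp only [block, window, List.bind_eq_flatMap, List.pure_def, ← List.map_eq_flatMap,
    List.map_map]
  rfl

@[simp]
theorem window_length (x : ℤ → A) (n : ℤ) (m : ℕ) : (window x n m).length = m := by
  simp [window]

theorem window_one (x : ℤ → A) (n : ℤ) : window x n 1 = [x n] := by
  simp [window]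

theorem window_add (x : ℤ → A) (n : ℤ) (m k : ℕ) :
    window x n (m + k) = window x n m ++ window x (n + m) k := by
  simp [window, List.range_add, add_assoc]

theorem window_eq_window_iff {x x' : ℤ → A} {n n' : ℤ} {m : ℕ} :
    window x n m = window x' n' m ↔ ∀ k < m, x (n + k) = x' (n' + k) := by
  simp [window, List.map_inj_left]

theorem window_eq_append_iff {x : ℤ → A} {n : ℤ} {u v : List A} :
    window x n (u.length + v.length) = u ++ v ↔
      window x n u.length = u ∧ window x (n + u.length) v.length = v := by
  rw [window_add]
  exact ⟨fun h => List.append_inj h (by simp), fun ⟨hu, hv⟩ => by rw [hu, hv]⟩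

theorem window_eq_window_iff_forall_window {x x' : ℤ → A} {n n' : ℤ} {m ℓ : ℕ} (hm : 0 < m) :
    window x n (m + ℓ) = window x' n' (m + ℓ) ↔
      ∀ k < m, window x (n + k) (ℓ + 1) = window x' (n' + k) (ℓ + 1) := by
  simp only [window_eq_window_iff]
  constructor
  · intro h k hk r hr
    simpa [add_assoc] using h (k + r) (by omega)
  · intro h j hj
    simpa [add_assoc, show min j (m - 1) + (j - min j (m - 1)) = j by omega] using
      h (min j (m - 1)) (by omega) (j - min j (m - 1)) (by omega)

end Window

section Sync

variable {A : Type*} {X : Set (ℤ → A)}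

theorem admissible_iff_exists_window {w : List A} :
    Admissible X w ↔ ∃ x ∈ X, ∃ n, window x n w.length = w := by
  simp [Admissible, List.ext_getElem_iff, window]

theorem admissible_window {x : ℤ → A} (hx : x ∈ X) (n : ℤ) (m : ℕ) :
    Admissible X (window x n m) :=
  admissible_iff_exists_window.2 ⟨x, hx, n, by rw [window_length]⟩

theorem Admissible.of_append_left {u v : List A} (h : Admissible X (u ++ v)) : Admissible X u := by
  obtain ⟨x, hx, n, hxn⟩ := admissible_iff_exists_window.1 h
  rw [List.length_append, window_eq_append_iff] at hxn
  exact hxn.1 ▸ admissible_window hx n _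

theorem IsSyncWord.append_right {v w : List A} (hv : IsSyncWord X v)
    (hvw : Admissible X (v ++ w)) : IsSyncWord X (v ++ w) := by
  refine ⟨hvw, fun u w' huvw hvww' => ?_⟩
  rw [← List.append_assoc] at huvw
  simpa using hv.2 u (w ++ w') huvw.of_append_left (by simpa using hvww')

theorem IsSyncWord.window_add {x : ℤ → A} {n : ℤ} {m : ℕ} (hx : x ∈ X)
    (h : IsSyncWord X (window x n m)) (k : ℕ) : IsSyncWord X (window x n (m + k)) := by
  rw [_root_.window_add] at *
  exact h.append_right (by rw [← _root_.window_add]; exact admissible_window hx n _)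

def GluesAlong (X : Set (ℤ → A)) (v : List A) : Prop :=
  ∀ x₁ ∈ X, ∀ x₂ ∈ X, ∀ n₁ n₂ : ℤ, window x₁ n₁ v.length = v → window x₂ n₂ v.length = v →
    ∀ p q : ℕ, ∃ x₃ ∈ X, ∃ n₃ : ℤ,
      window x₃ (n₃ - p) (p + v.length) = window x₁ (n₁ - p) (p + v.length) ∧
      window x₃ n₃ (v.length + q) = window x₂ n₂ (v.length + q)

theorem isSyncWord_iff_gluesAlong {v : List A} :
    IsSyncWord X v ↔ Admissible X v ∧ GluesAlong X v := by
  refine and_congr_right fun _ => ⟨fun hv => ?_, fun hv => ?_⟩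
  · intro x₁ hx₁ x₂ hx₂ n₁ n₂ h₁ h₂ p q
    have h₁' : window x₁ (n₁ - p) (p + v.length) = window x₁ (n₁ - p) p ++ v := by
      rw [window_add, sub_add_cancel, h₁]
    have h₂' : window x₂ n₂ (v.length + q) = v ++ window x₂ (n₂ + v.length) q := by
      rw [window_add, h₂]
    obtain ⟨x₃, hx₃, n, hn⟩ := admissible_iff_exists_window.1 <| hv _ _
      (h₁' ▸ admissible_window hx₁ _ _) (h₂' ▸ admissible_window hx₂ _ _)
    rw [List.append_assoc, List.length_append, window_eq_append_iff, List.length_append,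
      window_eq_append_iff] at hn
    refine ⟨x₃, hx₃, n + p, ?_, ?_⟩
    · simp only [add_sub_cancel_right, h₁', window_add]
      simp_all
    · simp only [h₂', window_add]
      simp_all
  · intro u w huv hvw
    obtain ⟨x₁, hx₁, n₁, h₁⟩ := admissible_iff_exists_window.1 huv
    obtain ⟨x₂, hx₂, n₂, h₂⟩ := admissible_iff_exists_window.1 hvw
    rw [List.length_append, window_eq_append_iff] at h₁ h₂
    obtain ⟨x₃, hx₃, n₃, e₁, e₂⟩ :=
      hv x₁ hx₁ x₂ hx₂ _ _ h₁.2 h₂.1 u.length w.length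
    refine admissible_iff_exists_window.2 ⟨x₃, hx₃, n₃ - u.length, ?_⟩
    rw [add_sub_cancel_right, window_eq_append_iff.2 h₁, window_eq_append_iff] at e₁
    rw [window_eq_append_iff.2 h₂, window_eq_append_iff] at e₂
    rw [List.length_append, window_eq_append_iff, List.length_append, window_eq_append_iff]
    exact ⟨e₁, by convert e₂.2 using 2; push_cast; ring⟩

end Sync

section HigherBlock

variable {A : Type*} {X : Set (ℤ → A)} {a b : ℤ}

def higherBlockMap (a b : ℤ) (x : ℤ → A) : ℤ → List A :=
  fun i => block x (i + a) (i + b)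

theorem higherBlock_eq_image (X : Set (ℤ → A)) (a b : ℤ) :
    higherBlock X a b = higherBlockMap a b '' X := by
  ext y
  exact ⟨fun ⟨x, hx, hy⟩ => ⟨x, hx, (funext hy).symm⟩,
    fun ⟨x, hx, hy⟩ => ⟨x, hx, fun i => by rw [← hy, higherBlockMap]⟩⟩

theorem higherBlockMap_apply (hab : a ≤ b) (x : ℤ → A) (i : ℤ) :
    higherBlockMap a b x i = window x (i + a) ((b - a).toNat + 1) := by
  rw [higherBlockMap, block_eq_window]
  congr 1
  omega

theorem window_higherBlockMap_eq_iff (hab : a ≤ b) {x x' : ℤ → A} {n n' : ℤ} {m : ℕ}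
    (hm : 0 < m) :
    window (higherBlockMap a b x) n m = window (higherBlockMap a b x') n' m ↔
      window x (n + a) (m + (b - a).toNat) = window x' (n' + a) (m + (b - a).toNat) := by
  rw [window_eq_window_iff, window_eq_window_iff_forall_window hm]
  simp only [higherBlockMap_apply hab, add_right_comm _ _ a]

theorem gluesAlong_higherBlock_iff (hab : a ≤ b) {x₀ : ℤ → A} {n : ℤ} {m : ℕ} (hm : 0 < m) :
    GluesAlong (higherBlock X a b) (window (higherBlockMap a b x₀) n m) ↔
      GluesAlong X (window x₀ (n + a) (m + (b - a).toNat)) := by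
  simp only [GluesAlong, higherBlock_eq_image, Set.forall_mem_image, Set.exists_mem_image,
    window_length]
  constructor
  · intro h x₁ hx₁ x₂ hx₂ n₁ n₂ h₁ h₂ p q
    obtain ⟨x₃, hx₃, n₃, e₁, e₂⟩ := h hx₁ hx₂ (n₁ - a) (n₂ - a)
      ((window_higherBlockMap_eq_iff hab hm).2 (by rwa [sub_add_cancel]))
      ((window_higherBlockMap_eq_iff hab hm).2 (by rwa [sub_add_cancel])) p q
    rw [window_higherBlockMap_eq_iff hab (by omega)] at e₁ e₂
    refine ⟨x₃, hx₃, n₃ + a, ?_, ?_⟩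
    · convert e₁ using 2 <;> ring
    · convert e₂ using 2 <;> ring
  · intro h x₁ hx₁ x₂ hx₂ n₁ n₂ h₁ h₂ p q
    rw [window_higherBlockMap_eq_iff hab hm] at h₁ h₂
    obtain ⟨x₃, hx₃, n₃, e₁, e₂⟩ := h x₁ hx₁ x₂ hx₂ _ _ h₁ h₂ p q
    refine ⟨x₃, hx₃, n₃ - a, ?_, ?_⟩
    · rw [window_higherBlockMap_eq_iff hab (by omega)]
      convert e₁ using 2 <;> ring
    · rw [window_higherBlockMap_eq_iff hab (by omega)]
      convert e₂ using 2 <;> ring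

theorem isSyncWord_higherBlock_iff (hab : a ≤ b) {x₀ : ℤ → A} (hx₀ : x₀ ∈ X) {n : ℤ} {m : ℕ}
    (hm : 0 < m) :
    IsSyncWord (higherBlock X a b) (window (higherBlockMap a b x₀) n m) ↔
      IsSyncWord X (window x₀ (n + a) (m + (b - a).toNat)) := by
  rw [isSyncWord_iff_gluesAlong, isSyncWord_iff_gluesAlong, gluesAlong_higherBlock_iff hab hm,
    higherBlock_eq_image]
  simp only [admissible_window hx₀, admissible_window (Set.mem_image_of_mem _ hx₀)]

theorem IsSyncWord.higherBlock (hab : a ≤ b) {x : ℤ → A} (hx : x ∈ X) {n : ℤ} {m : ℕ}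
    (hm : 0 < m) (h : IsSyncWord X (window x n m)) :
    IsSyncWord (higherBlock X a b) (window (higherBlockMap a b x) (n - a) m) :=
  (isSyncWord_higherBlock_iff hab hx hm).2 (by rw [sub_add_cancel]; exact h.window_add hx _)

theorem LangTransitive.higherBlock (hab : a ≤ b) (h : LangTransitive X) :
    LangTransitive (higherBlock X a b) := by
  intro u v hu hv
  rcases eq_or_ne u [] with rfl | hu₀
  · exact ⟨[], by simpa using hv⟩
  rcases eq_or_ne v [] with rfl | hv₀
  · exact ⟨[], by simpa using hu⟩
  rw [higherBlock_eq_image] at hu hv ⊢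
  obtain ⟨_, ⟨x₁, hx₁, rfl⟩, n₁, h₁⟩ := admissible_iff_exists_window.1 hu
  obtain ⟨_, ⟨x₂, hx₂, rfl⟩, n₂, h₂⟩ := admissible_iff_exists_window.1 hv
  set ℓ := (b - a).toNat
  obtain ⟨w, hw⟩ := h _ _ (admissible_window hx₁ (n₁ + a) (u.length + ℓ))
    (admissible_window hx₂ (n₂ + a) (v.length + ℓ))
  obtain ⟨x₃, hx₃, n₃, h₃⟩ := admissible_iff_exists_window.1 hw
  rw [List.length_append, window_eq_append_iff, List.length_append, window_eq_append_iff] at h₃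
  simp only [window_length] at h₃
  refine ⟨window (higherBlockMap a b x₃) (n₃ - a + u.length) (w.length + ℓ),
    admissible_iff_exists_window.2 ⟨_, Set.mem_image_of_mem _ hx₃, n₃ - a, ?_⟩⟩
  rw [List.length_append, window_eq_append_iff, List.length_append, window_eq_append_iff]
  refine ⟨⟨?_, by simp⟩, ?_⟩
  · refine ((window_higherBlockMap_eq_iff hab (List.length_pos_iff.2 hu₀)).2 ?_).trans h₁
    convert h₃.1.1 using 2
    ring
  · refine ((window_higherBlockMap_eq_iff hab (List.length_pos_iff.2 hv₀)).2 ?_).trans h₂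
    convert h₃.2 using 2
    simp only [window_length]
    push_cast
    ring

theorem SyncSubshift.higherBlock (hab : a ≤ b) (h : SyncSubshift X) :
    SyncSubshift (higherBlock X a b) := by
  obtain ⟨hX, v, hv⟩ := h
  obtain ⟨x, hx, n, hxv⟩ := admissible_iff_exists_window.1 hv.1
  rw [← hxv] at hv
  exact ⟨hX.higherBlock hab, _, (hv.window_add hx 1).higherBlock hab hx (by omega)⟩

end HigherBlock

theorem stmt2_general {A : Type*} (X : Set (ℤ → A))
    (hX : StronglySync X) (a b : ℤ) (hab : a ≤ b) :
    StronglySync (higherBlock X a b) := by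
  obtain ⟨hsync, Q, hQ⟩ := hX
  refine ⟨hsync.higherBlock hab, Q + (b - a).toNat, ?_⟩
  rintro y ⟨x, hx, hy⟩ I₁ I₂ hI h
  obtain rfl : y = higherBlockMap a b x := funext hy
  rw [block_eq_window, isSyncWord_higherBlock_iff hab hx (by omega)] at h
  obtain ⟨i, hi₁, hi₂, hi⟩ := hQ x hx (I₁ + a) (I₂ + b) (by omega) <| by
    rw [block_eq_window]
    convert h using 2
    omega
  refine ⟨i - a, by omega, by omega, ?_⟩
  rw [← window_one] at hi ⊢
  exact hi.higherBlock hab hx one_pos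

/-- Every higher block system of a strongly synchronizing subshift is strongly
synchronizing. -/
theorem stmt2 {A : Type*} [Fintype A] (X : Set (ℤ → A))
    (hX : StronglySync X) (a b : ℤ) (hab : a ≤ b) :
    StronglySync (higherBlock X a b) :=
  stmt2_general X hX a b hab
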